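/- If 𝒳 ⊂ ℝ^d is the closure of a bounded open set whose boundary ∂𝒳 is a (d−1)-dimensional C¹ submanifold of ℝ^d, then there exists a constant c > 0 such that |B(x,r) ∩ 𝒳| ≥ c·|B(x,r)| for all x ∈ 𝒳 and all 0 ≤ r ≤ diam(𝒳); that is, Condition (X2) holds. -/

import Mathlib

open MeasureTheory ProbabilityTheory Filter Set
open scoped ENNReal NNReal Classical

noncomputable section
set_option maxHeartbeats 2000000

abbrev Euc (d : ℕ) : Type := EuclideanSpace ℝ (Fin d)

/-- Condition (X2) with constant `c`. -/
def CondX2 {d : ℕ} (𝒳 : Set (Euc d)) (c : ℝ) : Prop :=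
  ∀ x ∈ 𝒳, ∀ r : ℝ, 0 ≤ r → r ≤ Metric.diam 𝒳 →
    ENNReal.ofReal c * volume (Metric.closedBall x r) ≤ volume (Metric.closedBall x r ∩ 𝒳)

/-- Condition (A). -/
def CondA {d : ℕ} (𝒳 : Set (Euc d)) (Q : Measure (Euc d)) : Prop :=
  ∃ M : ℝ, ∀ L : ℝ, 0 < L →
    L ^ ((1 : ℝ) / d) * ∫ x, Real.exp (-L * Metric.infDist x 𝒳ᶜ ^ d) ∂Q ≤ M

/-- `S ⊆ ℝ^{m+1}` is an `m`-dimensional `C¹` submanifold of `ℝ^{m+1}`: around each of its points,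
after an isometric linear change of coordinates, `S` is the graph of a `C¹` function of the
first `m` coordinates (description of submanifolds through graphs). -/
def IsC1Hypersurface {m : ℕ} (S : Set (Euc (m + 1))) : Prop :=
  ∀ z ∈ S, ∃ (V : Set (Euc (m + 1))) (L : Euc (m + 1) ≃ₗᵢ[ℝ] Euc (m + 1))
      (A : Set (Euc m)) (φ : Euc m → ℝ),
    IsOpen V ∧ z ∈ V ∧ IsOpen A ∧ ContDiffOn ℝ 1 φ A ∧
    V ∩ S = V ∩ (Set.image (fun a : Euc m =>
      L.symm (WithLp.toLp 2 (Fin.snoc a (φ a) : Fin (m + 1) → ℝ) : Euc (m + 1))) A)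


section Aux

variable {m : ℕ}

def emb (a : Euc m) (t : ℝ) : Euc (m + 1) := WithLp.toLp 2 (Fin.snoc a t : Fin (m + 1) → ℝ)

lemma dist_emb_sq (a a' : Euc m) (t t' : ℝ) :
    dist (emb a t) (emb a' t') ^ 2 = dist a a' ^ 2 + dist t t' ^ 2 := by
  have h1 : dist (emb a t) (emb a' t') = Real.sqrt (∑ i, dist ((emb a t) i) ((emb a' t') i) ^ 2) :=
    EuclideanSpace.dist_eq _ _
  have h2 : dist a a' = Real.sqrt (∑ i, dist (a i) (a' i) ^ 2) := EuclideanSpace.dist_eq _ _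
  rw [h1, Real.sq_sqrt (by positivity), Fin.sum_univ_castSucc]
  have : ∀ i : Fin m, dist (emb a t (Fin.castSucc i)) (emb a' t' (Fin.castSucc i))
      = dist (a i) (a' i) := by
    intro i; simp [emb, Fin.snoc_castSucc]
  simp only [this]
  have hl : dist (emb a t (Fin.last m)) (emb a' t' (Fin.last m)) = dist t t' := by
    simp [emb, Fin.snoc_last]
  rw [hl, h2, Real.sq_sqrt (by positivity)]

lemma dist_emb_le (a a' : Euc m) (t t' : ℝ) :
    dist (emb a t) (emb a' t') ≤ dist a a' + dist t t' := by
  have h := dist_emb_sq a a' t t'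
  nlinarith [dist_nonneg (x := emb a t) (y := emb a' t'), dist_nonneg (x := a) (y := a'),
    dist_nonneg (x := t) (y := t')]

lemma emb_dist_fst_le (a a' : Euc m) (t t' : ℝ) :
    dist a a' ≤ dist (emb a t) (emb a' t') := by
  have h := dist_emb_sq a a' t t'
  nlinarith [dist_nonneg (x := emb a t) (y := emb a' t'), dist_nonneg (x := a) (y := a'),
    dist_nonneg (x := t) (y := t')]

lemma emb_dist_snd_le (a a' : Euc m) (t t' : ℝ) :
    dist t t' ≤ dist (emb a t) (emb a' t') := by
  have h := dist_emb_sq a a' t t'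
  nlinarith [dist_nonneg (x := emb a t) (y := emb a' t'), dist_nonneg (x := a) (y := a'),
    dist_nonneg (x := t) (y := t')]

lemma emb_eta (v : Euc (m + 1)) :
    emb (WithLp.toLp 2 (fun i => v (Fin.castSucc i))) (v (Fin.last m)) = v := by
  ext i
  exact congrFun (Fin.snoc_init_self (q := (v : Fin (m+1) → ℝ))) i

lemma emb_inj {a a' : Euc m} {t t' : ℝ} (h : emb a t = emb a' t') : a = a' ∧ t = t' := by
  constructor
  · have := emb_dist_fst_le a a' t t'
    rw [h, dist_self] at this
    exact dist_le_zero.mp this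
  · have := emb_dist_snd_le a a' t t'
    rw [h, dist_self] at this
    exact dist_le_zero.mp this

lemma emb_continuous : Continuous (fun p : Euc m × ℝ => emb p.1 p.2) := by
  rw [Metric.continuous_iff]
  intro p ε hε
  refine ⟨ε/2, by positivity, fun q hq => ?_⟩
  calc dist (emb q.1 q.2) (emb p.1 p.2) ≤ dist q.1 p.1 + dist q.2 p.2 := dist_emb_le _ _ _ _
    _ ≤ dist q p + dist q p := add_le_add (le_max_left _ _ |>.trans_eq Prod.dist_eq.symm) (le_max_right _ _ |>.trans_eq Prod.dist_eq.symm)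
    _ < ε := by linarith


lemma sigma_le_abs {σ : ℝ} (hσ : σ = 1 ∨ σ = -1) (u : ℝ) : σ * u ≤ |u| ∧ -|u| ≤ σ * u := by
  rcases hσ with rfl | rfl <;> constructor <;> simp only [one_mul, neg_one_mul]
  · exact le_abs_self u
  · exact neg_abs_le u
  · exact neg_le_abs u
  · exact neg_le_neg (le_abs_self u)

lemma sigma_sq {σ : ℝ} (hσ : σ = 1 ∨ σ = -1) : σ * σ = 1 := by
  rcases hσ with rfl | rfl <;> norm_num

lemma convex_band {σ : ℝ} (hσ : σ = 1 ∨ σ = -1) {c₁ c₂ lo hi : ℝ} :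
    Convex ℝ {s : ℝ | lo < σ * (s - c₁) ∧ σ * (s - c₂) < hi} := by
  rcases hσ with rfl | rfl
  · have h : {s : ℝ | lo < 1 * (s - c₁) ∧ 1 * (s - c₂) < hi} = Ioi (lo + c₁) ∩ Iio (hi + c₂) := by
      ext s
      simp only [mem_setOf_eq, mem_inter_iff, mem_Ioi, mem_Iio, one_mul]
      constructor <;> intro h <;> exact ⟨by linarith [h.1, h.2], by linarith [h.1, h.2]⟩
    rw [h]; exact (convex_Ioi _).inter (convex_Iio _)
  · have h : {s : ℝ | lo < -1 * (s - c₁) ∧ -1 * (s - c₂) < hi} = Ioi (c₂ - hi) ∩ Iio (c₁ - lo) := by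
      ext s
      simp only [mem_setOf_eq, mem_inter_iff, mem_Ioi, mem_Iio, neg_one_mul]
      constructor <;> intro h <;> exact ⟨by linarith [h.1, h.2], by linarith [h.1, h.2]⟩
    rw [h]; exact (convex_Ioi _).inter (convex_Iio _)

lemma preconnected_G {σ : ℝ} (hσ : σ = 1 ∨ σ = -1) (a₀ : Euc m) (φ : Euc m → ℝ) (ρ k : ℝ)
    (hρ : 0 < ρ) (hk : 0 ≤ k)
    (hlip : ∀ x ∈ Metric.ball a₀ ρ, ∀ y ∈ Metric.ball a₀ ρ, |φ x - φ y| ≤ k * dist x y) :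
    IsPreconnected {p : Euc m × ℝ |
      p.1 ∈ Metric.ball a₀ ρ ∧ 0 < σ * (p.2 - φ p.1) ∧ σ * (p.2 - φ a₀) < (k + 1) * ρ} := by
  have hσσ := sigma_sq hσ
  set T : ℝ := (k + 1) * ρ with hT
  set Top : Set (Euc m × ℝ) :=
    Metric.ball a₀ ρ ×ˢ {s : ℝ | k * ρ < σ * (s - φ a₀) ∧ σ * (s - φ a₀) < T} with hTop
  set Seg : Euc m → Set (Euc m × ℝ) :=
    fun a => {a} ×ˢ {s : ℝ | 0 < σ * (s - φ a) ∧ σ * (s - φ a₀) < T} with hSeg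
  have hTopG : Top ⊆ {p : Euc m × ℝ |
      p.1 ∈ Metric.ball a₀ ρ ∧ 0 < σ * (p.2 - φ p.1) ∧ σ * (p.2 - φ a₀) < T} := by
    rintro ⟨a, s⟩ ⟨ha, hs1, hs2⟩
    refine ⟨ha, ?_, hs2⟩
    have h1 : |φ a - φ a₀| ≤ k * dist a a₀ := hlip a ha a₀ (Metric.mem_ball_self hρ)
    have h2 : dist a a₀ < ρ := Metric.mem_ball.mp ha
    have h3 := (sigma_le_abs hσ (φ a₀ - φ a)).2
    have h4 : σ * (s - φ a) = σ * (s - φ a₀) + σ * (φ a₀ - φ a) := by ring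
    rw [h4]
    rw [abs_sub_comm] at h1
    nlinarith
  -- common point
  set s₀ : ℝ := φ a₀ + σ * (k * ρ + ρ / 2) with hs₀
  have hs₀mem : k * ρ < σ * (s₀ - φ a₀) ∧ σ * (s₀ - φ a₀) < T := by
    have : σ * (s₀ - φ a₀) = (σ * σ) * (k * ρ + ρ / 2) := by rw [hs₀]; ring
    rw [this, hσσ, one_mul]
    constructor <;> nlinarith
  set p₀ : Euc m × ℝ := (a₀, s₀) with hp₀
  have hp₀Top : p₀ ∈ Top := ⟨Metric.mem_ball_self hρ, hs₀mem⟩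
  have hqa : ∀ a ∈ Metric.ball a₀ ρ, (a, s₀) ∈ Seg a ∩ Top := by
    intro a ha
    have h1 : |φ a₀ - φ a| ≤ k * dist a₀ a := hlip a₀ (Metric.mem_ball_self hρ) a ha
    have h2 : dist a₀ a < ρ := by rw [dist_comm]; exact Metric.mem_ball.mp ha
    have h3 := (sigma_le_abs hσ (φ a₀ - φ a)).2
    have h4 : σ * (s₀ - φ a) = σ * (φ a₀ - φ a) + (σ * σ) * (k * ρ + ρ / 2) := by
      rw [hs₀]; ring
    refine ⟨⟨rfl, ?_, hs₀mem.2⟩, ha, hs₀mem⟩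
    rw [h4, hσσ]
    nlinarith
  have hunion : {p : Euc m × ℝ |
      p.1 ∈ Metric.ball a₀ ρ ∧ 0 < σ * (p.2 - φ p.1) ∧ σ * (p.2 - φ a₀) < T}
      = ⋃₀ ((fun a => Seg a ∪ Top) '' Metric.ball a₀ ρ) := by
    ext ⟨a, s⟩
    constructor
    · rintro ⟨ha, h1, h2⟩
      exact ⟨Seg a ∪ Top, ⟨a, ha, rfl⟩, Or.inl ⟨rfl, h1, h2⟩⟩
    · rintro ⟨S, ⟨a', ha', rfl⟩, hmem⟩
      rcases hmem with h | h
      · obtain ⟨h1, h2, h3⟩ := h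
        simp only [mem_singleton_iff] at h1
        subst h1
        exact ⟨ha', h2, h3⟩
      · exact hTopG h
  rw [hunion]
  apply isPreconnected_sUnion p₀
  · rintro S ⟨a, ha, rfl⟩
    exact Or.inr hp₀Top
  · rintro S ⟨a, ha, rfl⟩
    have hconv1 : Convex ℝ (Seg a) := (convex_singleton a).prod (convex_band hσ)
    have hconv2 : Convex ℝ Top := (convex_ball a₀ ρ).prod (convex_band hσ)
    exact IsPreconnected.union (a, s₀) (hqa a ha).1 (hqa a ha).2
      hconv1.isPreconnected hconv2.isPreconnected


set_option maxHeartbeats 10000000 in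
lemma local_cone (𝒳 : Set (Euc (m + 1))) (hXcl : IsClosed 𝒳)
    (hXint : 𝒳 ⊆ closure (interior 𝒳)) (z : Euc (m + 1)) (hz : z ∈ frontier 𝒳)
    (V : Set (Euc (m + 1))) (L : Euc (m + 1) ≃ₗᵢ[ℝ] Euc (m + 1)) (A : Set (Euc m))
    (φ : Euc m → ℝ) (hV : IsOpen V) (hzV : z ∈ V) (hA : IsOpen A) (hφ : ContDiffOn ℝ 1 φ A)
    (hgraph : V ∩ frontier 𝒳 = V ∩ ((fun a => L.symm (emb a (φ a))) '' A)) :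
    ∃ ε > 0, ∃ c > 0, ∀ z' ∈ frontier 𝒳 ∩ Metric.ball z ε, ∀ r : ℝ, 0 < r → r ≤ ε →
      ∃ y, Metric.closedBall y (c * r) ⊆ Metric.closedBall z' r ∩ 𝒳 := by
  -- base point a₀
  have hz2 : z ∈ V ∩ ((fun a => L.symm (emb a (φ a))) '' A) := hgraph ▸ ⟨hzV, hz⟩
  obtain ⟨-, a₀, ha₀A, hza₀⟩ := hz2
  -- Lipschitz constant
  obtain ⟨K, t, htn, hlip⟩ := (hφ.contDiffAt (hA.mem_nhds ha₀A)).exists_lipschitzOnWith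
  set k : ℝ := (K : ℝ) with hkdef
  have hk0 : 0 ≤ k := K.coe_nonneg
  obtain ⟨ρ₀, hρ₀, hball₀⟩ := Metric.mem_nhds_iff.mp (Filter.inter_mem (hA.mem_nhds ha₀A) htn)
  obtain ⟨η, hη, hballV⟩ := Metric.mem_nhds_iff.mp (hV.mem_nhds hzV)
  set ρ : ℝ := min ρ₀ (η / (k + 2)) with hρdef
  have hρ : 0 < ρ := lt_min hρ₀ (by positivity)
  have hρρ₀ : ρ ≤ ρ₀ := min_le_left _ _
  have hρη : (k + 2) * ρ ≤ η := by
    have h1 : ρ ≤ η / (k + 2) := min_le_right _ _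
    have h2 : 0 < k + 2 := by linarith
    calc (k + 2) * ρ ≤ (k + 2) * (η / (k + 2)) := by nlinarith
      _ = η := by field_simp
  set T : ℝ := (k + 1) * ρ with hTdef
  have hsubA : Metric.ball a₀ ρ ⊆ A := fun x hx => (hball₀ (Metric.ball_subset_ball hρρ₀ hx)).1
  have hsubt : Metric.ball a₀ ρ ⊆ t := fun x hx => (hball₀ (Metric.ball_subset_ball hρρ₀ hx)).2
  have ha₀ρ : a₀ ∈ Metric.ball a₀ ρ := Metric.mem_ball_self hρ
  have hlipφ : ∀ x ∈ Metric.ball a₀ ρ, ∀ y ∈ Metric.ball a₀ ρ, |φ x - φ y| ≤ k * dist x y := by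
    intro x hx y hy
    have h := hlip.dist_le_mul x (hsubt hx) y (hsubt hy)
    simpa [Real.dist_eq] using h
  set Φ : Euc m × ℝ → Euc (m + 1) := fun p => L.symm (emb p.1 p.2) with hΦ
  have hΦdist : ∀ p q : Euc m × ℝ, dist (Φ p) (Φ q) = dist (emb p.1 p.2) (emb q.1 q.2) :=
    fun p q => L.symm.dist_map _ _
  have hzΦ : z = Φ (a₀, φ a₀) := hza₀.symm
  set G : ℝ → Set (Euc m × ℝ) := fun σ =>
    {p : Euc m × ℝ | p.1 ∈ Metric.ball a₀ ρ ∧ 0 < σ * (p.2 - φ p.1) ∧ σ * (p.2 - φ a₀) < T}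
    with hGdef
  -- points of G σ map into V
  have hGV : ∀ σ : ℝ, (σ = 1 ∨ σ = -1) → ∀ p ∈ G σ, Φ p ∈ V := by
    rintro σ hσ ⟨a, s⟩ ⟨ha, hs1, hs2⟩
    apply hballV
    rw [Metric.mem_ball]
    have hd : dist (Φ (a, s)) z = dist (emb a s) (emb a₀ (φ a₀)) := by
      rw [hzΦ]; exact hΦdist _ _
    have hle : dist (emb a s) (emb a₀ (φ a₀)) ≤ dist a a₀ + dist s (φ a₀) :=
      dist_emb_le _ _ _ _
    -- |s - φ a₀| < T
    have hφa : |φ a - φ a₀| ≤ k * dist a a₀ := hlipφ a ha a₀ ha₀ρ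
    have haρ' : dist a a₀ < ρ := Metric.mem_ball.mp ha
    have h3 := (sigma_le_abs hσ (φ a - φ a₀)).2
    have hσσ := sigma_sq hσ
    have hlow : -T < σ * (s - φ a₀) := by
      have h4 : σ * (s - φ a₀) = σ * (s - φ a) + σ * (φ a - φ a₀) := by ring
      rw [h4, hTdef]
      nlinarith
    have habs : |s - φ a₀| < T := by
      have h5 : |σ * (s - φ a₀)| < T := abs_lt.mpr ⟨hlow, hs2⟩
      have h6 : |σ| = 1 := by rcases hσ with rfl | rfl <;> norm_num
      rwa [abs_mul, h6, one_mul] at h5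
    rw [hd]
    have : dist s (φ a₀) = |s - φ a₀| := Real.dist_eq _ _
    calc dist (emb a s) (emb a₀ (φ a₀)) ≤ dist a a₀ + dist s (φ a₀) := hle
      _ < ρ + T := by rw [this]; exact add_lt_add haρ' habs
      _ = (k + 2) * ρ := by rw [hTdef]; ring
      _ ≤ η := hρη
  -- G σ avoids the frontier
  have hGfr : ∀ σ : ℝ, (σ = 1 ∨ σ = -1) → ∀ p ∈ G σ, Φ p ∉ frontier 𝒳 := by
    rintro σ hσ ⟨a, s⟩ hp hfr
    obtain ⟨ha, hs1, hs2⟩ := hp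
    have hmem : Φ (a, s) ∈ V ∩ ((fun a => L.symm (emb a (φ a))) '' A) :=
      hgraph ▸ ⟨hGV σ hσ _ ⟨ha, hs1, hs2⟩, hfr⟩
    obtain ⟨-, b, hbA, hb⟩ := hmem
    have : emb b (φ b) = emb a s := L.symm.injective hb
    obtain ⟨rfl, hts⟩ := emb_inj this
    rw [← hts] at hs1
    simp at hs1
  -- each E σ lies inside interior or exterior
  have hEsub : ∀ σ : ℝ, (σ = 1 ∨ σ = -1) → (Φ '' G σ ∩ interior 𝒳).Nonempty →
      Φ '' G σ ⊆ interior 𝒳 := by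
    intro σ hσ hne
    have hpre : IsPreconnected (Φ '' G σ) := by
      have h := preconnected_G hσ a₀ φ ρ k hρ hk0 hlipφ
      rw [← hTdef] at h
      have hc : Continuous Φ := L.symm.continuous.comp emb_continuous
      exact h.image Φ hc.continuousOn
    have hsub : Φ '' G σ ⊆ interior 𝒳 ∪ 𝒳ᶜ := by
      rintro w ⟨p, hp, rfl⟩
      by_cases hw : Φ p ∈ 𝒳
      · left
        by_contra hint
        exact hGfr σ hσ p hp ⟨subset_closure hw, hint⟩
      · right; exact hw
    have hdisj : Disjoint (interior 𝒳) (𝒳ᶜ) :=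
      disjoint_compl_right.mono_left interior_subset
    rcases hpre.subset_left_of_subset_union isOpen_interior hXcl.isOpen_compl hdisj hsub hne with h
    exact h
  -- conclusion
  refine ⟨ρ / 2, by positivity, 1 / (2 * (k + 2)), by positivity, ?_⟩
  rintro z' ⟨hz'fr, hz'ball⟩ r hr hrε
  have hz'V : z' ∈ V := by
    apply hballV
    apply Metric.mem_ball.mpr
    have h1 := Metric.mem_ball.mp hz'ball
    nlinarith [mul_nonneg hk0 hρ.le]
  have hz'mem : z' ∈ V ∩ ((fun a => L.symm (emb a (φ a))) '' A) := hgraph ▸ ⟨hz'V, hz'fr⟩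
  obtain ⟨-, a', ha'A, ha'⟩ := hz'mem
  have hz'Φ : z' = Φ (a', φ a') := ha'.symm
  have hLz' : dist a' a₀ < ρ / 2 := by
    have h1 : dist a' a₀ ≤ dist (emb a' (φ a')) (emb a₀ (φ a₀)) := emb_dist_fst_le _ _ _ _
    have h2 : dist (emb a' (φ a')) (emb a₀ (φ a₀)) = dist z' z := by
      conv_rhs => rw [hz'Φ, hzΦ]
      exact (hΦdist (a', φ a') (a₀, φ a₀)).symm
    have h3 : dist z' z < ρ / 2 := Metric.mem_ball.mp hz'ball
    linarith
  have ha'ρ : a' ∈ Metric.ball a₀ ρ := by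
    rw [Metric.mem_ball]; linarith
  have hφa' : |φ a' - φ a₀| ≤ k * (ρ / 2) := by
    have h := hlipφ a' ha'ρ a₀ ha₀ρ
    nlinarith [dist_nonneg (x := a') (y := a₀)]
  -- decomposition of any point
  have hdecomp : ∀ v : Euc (m + 1),
      v = Φ (WithLp.toLp 2 (fun i => (L v) (Fin.castSucc i)), (L v) (Fin.last m)) := by
    intro v
    show v = L.symm (emb _ _)
    rw [emb_eta (L v)]
    exact (L.symm_apply_apply v).symm
  -- a nearby interior point, classified
  have hz'X : z' ∈ 𝒳 := hXcl.frontier_subset hz'fr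
  obtain ⟨w, hwint, hwd⟩ := Metric.mem_closure_iff.mp (hXint hz'X) (ρ / 4) (by positivity)
  rw [dist_comm] at hwd
  -- coordinates of w
  set b : Euc m := WithLp.toLp 2 (fun i => (L w) (Fin.castSucc i)) with hbdef
  set sw : ℝ := (L w) (Fin.last m) with hswdef
  have hwΦ : w = Φ (b, sw) := hdecomp w
  have hLw : emb b sw = L w := by rw [hbdef, hswdef]; exact emb_eta (L w)
  have hLz'2 : emb a' (φ a') = L z' := by
    rw [hz'Φ]; exact (L.apply_symm_apply _).symm
  have hdw : dist (emb b sw) (emb a' (φ a')) = dist w z' := by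
    rw [hLw, hLz'2]; exact L.dist_map _ _
  have hba' : dist b a' < ρ / 4 := by
    have h1 := emb_dist_fst_le b a' sw (φ a')
    rw [hdw] at h1
    linarith
  have hswa' : |sw - φ a'| < ρ / 4 := by
    have h1 := emb_dist_snd_le b a' sw (φ a')
    rw [hdw] at h1
    rw [Real.dist_eq] at h1
    linarith
  -- w is not on the graph
  have hbρ : b ∈ Metric.ball a₀ ρ := by
    rw [Metric.mem_ball]
    calc dist b a₀ ≤ dist b a' + dist a' a₀ := dist_triangle _ _ _
      _ < ρ / 4 + ρ / 2 := add_lt_add hba' hLz'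
      _ < ρ := by linarith
  have hwne : sw ≠ φ b := by
    intro heq
    have hwV : w ∈ V := by
      apply hballV
      rw [Metric.mem_ball]
      calc dist w z ≤ dist w z' + dist z' z := dist_triangle _ _ _
        _ < ρ / 4 + ρ / 2 := add_lt_add hwd (Metric.mem_ball.mp hz'ball)
        _ ≤ η := by nlinarith [mul_nonneg hk0 hρ.le]
    have hwmem : w ∈ V ∩ ((fun a => L.symm (emb a (φ a))) '' A) :=
      ⟨hwV, ⟨b, hsubA hbρ, by show L.symm (emb b (φ b)) = w; rw [← heq]; exact hwΦ.symm⟩⟩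
    rw [← hgraph] at hwmem
    have hfr2 := hwmem.2
    rw [← closure_diff_interior] at hfr2
    exact hfr2.2 hwint
  -- choose the side
  set σ : ℝ := if φ b < sw then 1 else -1 with hσdef
  have hσ : σ = 1 ∨ σ = -1 := by
    rw [hσdef]; split <;> simp
  have hσσ := sigma_sq hσ
  have hσabs : |σ| = 1 := by rcases hσ with h | h <;> rw [h] <;> norm_num
  have hwG : (b, sw) ∈ G σ := by
    refine ⟨hbρ, ?_, ?_⟩
    · show 0 < σ * (sw - φ b)
      rw [hσdef]
      rcases lt_or_gt_of_ne hwne with h | h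
      · rw [if_neg (by linarith)]; nlinarith
      · rw [if_pos h]; nlinarith
    · show σ * (sw - φ a₀) < T
      have h1 := (sigma_le_abs hσ (sw - φ a₀)).1
      have h2 : |sw - φ a₀| ≤ |sw - φ a'| + |φ a' - φ a₀| := by
        have h3 : sw - φ a₀ = (sw - φ a') + (φ a' - φ a₀) := by ring
        rw [h3]; exact abs_add_le _ _
      rw [hTdef]
      nlinarith [mul_nonneg hk0 hρ.le]
  have hint : Φ '' G σ ⊆ interior 𝒳 :=
    hEsub σ hσ ⟨w, ⟨(b, sw), hwG, hwΦ.symm⟩, hwint⟩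
  -- the cone ball
  set s₀ : ℝ := r / (2 * (k + 2)) with hs₀def
  have hs₀pos : 0 < s₀ := by rw [hs₀def]; positivity
  have hr2 : r = 2 * (k + 2) * s₀ := by rw [hs₀def]; field_simp
  have hs₀r : s₀ ≤ r / 4 := by nlinarith
  have hs₀ρ : s₀ ≤ ρ / 8 := by nlinarith
  set y : Euc (m + 1) := Φ (a', φ a' + σ * (r / 2)) with hydef
  refine ⟨y, ?_⟩
  have hcr : 1 / (2 * (k + 2)) * r = s₀ := by rw [hs₀def]; ring
  rw [hcr]
  intro v hv
  have hv' : dist v y ≤ s₀ := Metric.mem_closedBall.mp hv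
  -- coordinates of v
  set bv : Euc m := WithLp.toLp 2 (fun i => (L v) (Fin.castSucc i)) with hbvdef
  set sv : ℝ := (L v) (Fin.last m) with hsvdef
  have hvΦ : v = Φ (bv, sv) := hdecomp v
  have hLv : emb bv sv = L v := by rw [hbvdef, hsvdef]; exact emb_eta (L v)
  have hLy : emb a' (φ a' + σ * (r / 2)) = L y := by
    rw [hydef]; exact (L.apply_symm_apply _).symm
  have hdvy : dist (emb bv sv) (emb a' (φ a' + σ * (r / 2))) = dist v y := by
    rw [hLv, hLy]; exact L.dist_map _ _
  have hb1 : dist bv a' ≤ s₀ := by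
    have h1 := emb_dist_fst_le bv a' sv (φ a' + σ * (r / 2))
    rw [hdvy] at h1
    linarith
  have hb2 : |sv - (φ a' + σ * (r / 2))| ≤ s₀ := by
    have h1 := emb_dist_snd_le bv a' sv (φ a' + σ * (r / 2))
    rw [hdvy, Real.dist_eq] at h1
    linarith
  have hbvρ : bv ∈ Metric.ball a₀ ρ := by
    rw [Metric.mem_ball]
    calc dist bv a₀ ≤ dist bv a' + dist a' a₀ := dist_triangle _ _ _
      _ < ρ / 8 + ρ / 2 := add_lt_add_of_le_of_lt (hb1.trans hs₀ρ) hLz'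
      _ < ρ := by linarith
  have hvG : (bv, sv) ∈ G σ := by
    refine ⟨hbvρ, ?_, ?_⟩
    · show 0 < σ * (sv - φ bv)
      have hid : σ * (sv - φ bv) =
          σ * (sv - (φ a' + σ * (r / 2))) - σ * (φ bv - φ a') + (σ * σ) * (r / 2) := by ring
      rw [hid, hσσ]
      have hA : -s₀ ≤ σ * (sv - (φ a' + σ * (r / 2))) :=
        le_trans (neg_le_neg hb2) (sigma_le_abs hσ _).2
      have hB : σ * (φ bv - φ a') ≤ k * s₀ := by
        have h1 := (sigma_le_abs hσ (φ bv - φ a')).1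
        have h2 := hlipφ bv hbvρ a' ha'ρ
        nlinarith
      linarith
    · show σ * (sv - φ a₀) < T
      have h1 := (sigma_le_abs hσ (sv - φ a₀)).1
      have habs3 : |sv - φ a₀| ≤ |sv - (φ a' + σ * (r / 2))| + (|φ a' - φ a₀| + |σ * (r / 2)|) := by
        have h3 : sv - φ a₀ = (sv - (φ a' + σ * (r / 2))) + ((φ a' - φ a₀) + σ * (r / 2)) := by
          ring
        rw [h3]
        exact (abs_add_le _ _).trans (by gcongr; exact abs_add_le _ _)
      have hσr : |σ * (r / 2)| = r / 2 := by
        rw [abs_mul, hσabs, one_mul, abs_of_pos (by linarith)]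
      rw [hTdef]
      nlinarith [mul_nonneg hk0 hρ.le]
  have hvX : v ∈ 𝒳 := interior_subset (hint ⟨(bv, sv), hvG, hvΦ.symm⟩)
  have hyz' : dist y z' ≤ r / 2 := by
    have h1 : dist y z' = dist (emb a' (φ a' + σ * (r / 2))) (emb a' (φ a')) := by
      conv_lhs => rw [hydef, hz'Φ]
      exact hΦdist _ _
    have h2 := dist_emb_le a' a' (φ a' + σ * (r / 2)) (φ a')
    have h3 : dist (φ a' + σ * (r / 2)) (φ a') = |σ * (r / 2)| := by
      rw [Real.dist_eq]; ring_nf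
    have hσr : |σ * (r / 2)| = r / 2 := by
      rw [abs_mul, hσabs, one_mul, abs_of_pos (by linarith)]
    rw [h1]
    simp only [dist_self] at h2
    rw [h3, hσr] at h2
    linarith
  constructor
  · rw [Metric.mem_closedBall]
    calc dist v z' ≤ dist v y + dist y z' := dist_triangle _ _ _
      _ ≤ s₀ + r / 2 := add_le_add hv' hyz'
      _ ≤ r := by linarith
  · exact hvX


lemma frontier_cone (𝒳 : Set (Euc (m + 1))) (hXcl : IsClosed 𝒳)
    (hXbdd : Bornology.IsBounded 𝒳) (hXint : 𝒳 ⊆ closure (interior 𝒳))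
    (hbound : IsC1Hypersurface (frontier 𝒳)) (hdiam : 0 < Metric.diam 𝒳) :
    ∃ c : ℝ, 0 < c ∧ ∀ z ∈ frontier 𝒳, ∀ r : ℝ, 0 < r → r ≤ Metric.diam 𝒳 →
      ∃ y, Metric.closedBall y (c * r) ⊆ Metric.closedBall z r ∩ 𝒳 := by
  rcases eq_empty_or_nonempty (frontier 𝒳) with hF | hFne
  · exact ⟨1 / 2, by norm_num, fun z hz => by rw [hF] at hz; exact absurd hz (notMem_empty z)⟩
  have hH : ∀ z : frontier 𝒳, ∃ ε > 0, ∃ c > 0,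
      ∀ z' ∈ frontier 𝒳 ∩ Metric.ball (z : Euc (m + 1)) ε, ∀ r : ℝ, 0 < r → r ≤ ε →
      ∃ y, Metric.closedBall y (c * r) ⊆ Metric.closedBall z' r ∩ 𝒳 := by
    rintro ⟨z, hz⟩
    obtain ⟨V, L, A, φ, hV, hzV, hA, hφ, hgraph⟩ := hbound z hz
    exact local_cone 𝒳 hXcl hXint z hz V L A φ hV hzV hA hφ hgraph
  choose ε hε c hc P using hH
  have hFcp : IsCompact (frontier 𝒳) :=
    Metric.isCompact_of_isClosed_isBounded isClosed_frontier
      (hXbdd.subset hXcl.frontier_subset)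
  have hcover : frontier 𝒳 ⊆ ⋃ z : frontier 𝒳, Metric.ball (z : Euc (m + 1)) (ε z) :=
    fun z hz => mem_iUnion.mpr ⟨⟨z, hz⟩, Metric.mem_ball_self (hε ⟨z, hz⟩)⟩
  obtain ⟨I, hI⟩ := hFcp.elim_finite_subcover _ (fun z => Metric.isOpen_ball) hcover
  have hIne : I.Nonempty := by
    obtain ⟨z, hz⟩ := hFne
    obtain ⟨i, hiI, -⟩ := mem_iUnion₂.mp (hI hz)
    exact ⟨i, hiI⟩
  set ε' : ℝ := I.inf' hIne ε with hε'def
  set c' : ℝ := I.inf' hIne c with hc'def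
  have hε'pos : 0 < ε' := by
    rw [hε'def, Finset.lt_inf'_iff]
    exact fun i _ => hε i
  have hc'pos : 0 < c' := by
    rw [hc'def, Finset.lt_inf'_iff]
    exact fun i _ => hc i
  -- uniform small-radius statement
  have hsmall : ∀ z ∈ frontier 𝒳, ∀ r : ℝ, 0 < r → r ≤ ε' →
      ∃ y, Metric.closedBall y (c' * r) ⊆ Metric.closedBall z r ∩ 𝒳 := by
    intro z hz r hr hrε
    obtain ⟨i, hiI, hzi⟩ := mem_iUnion₂.mp (hI hz)
    obtain ⟨y, hy⟩ := P i z ⟨hz, hzi⟩ r hr (hrε.trans (Finset.inf'_le ε hiI))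
    refine ⟨y, subset_trans ?_ hy⟩
    apply Metric.closedBall_subset_closedBall
    exact mul_le_mul_of_nonneg_right (Finset.inf'_le c hiI) hr.le
  set c₀ : ℝ := c' * min 1 (ε' / Metric.diam 𝒳) with hc₀def
  have hc₀pos : 0 < c₀ := by
    rw [hc₀def]
    apply mul_pos hc'pos
    exact lt_min one_pos (by positivity)
  refine ⟨c₀, hc₀pos, ?_⟩
  intro z hz r hr hrdiam
  set r' : ℝ := min r ε' with hr'def
  have hr'pos : 0 < r' := lt_min hr hε'pos
  obtain ⟨y, hy⟩ := hsmall z hz r' hr'pos (min_le_right _ _)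
  refine ⟨y, subset_trans (Metric.closedBall_subset_closedBall ?_) (hy.trans ?_)⟩
  · -- c₀ * r ≤ c' * r'
    rw [hc₀def, hr'def]
    rcases le_total r ε' with h | h
    · rw [min_eq_left h]
      have h2 : c' * min 1 (ε' / Metric.diam 𝒳) ≤ c' * 1 :=
        mul_le_mul_of_nonneg_left (min_le_left _ _) hc'pos.le
      rw [mul_one] at h2
      exact mul_le_mul_of_nonneg_right h2 hr.le
    · rw [min_eq_right h]
      have h1 : min 1 (ε' / Metric.diam 𝒳) ≤ ε' / Metric.diam 𝒳 := min_le_right _ _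
      have h3 : c' * min 1 (ε' / Metric.diam 𝒳) * r ≤ c' * (ε' / Metric.diam 𝒳) * r :=
        mul_le_mul_of_nonneg_right (mul_le_mul_of_nonneg_left h1 hc'pos.le) hr.le
      apply h3.trans
      have hne : Metric.diam 𝒳 ≠ 0 := hdiam.ne'
      have heq : c' * (ε' / Metric.diam 𝒳) * r = c' * ε' * (r / Metric.diam 𝒳) := by
        field_simp
      rw [heq]
      have h4 : r / Metric.diam 𝒳 ≤ 1 := by
        rw [div_le_one hdiam]; exact hrdiam
      have h5 : c' * ε' * (r / Metric.diam 𝒳) ≤ c' * ε' * 1 :=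
        mul_le_mul_of_nonneg_left h4 (by positivity)
      rw [mul_one] at h5
      exact h5
  · exact inter_subset_inter_left _ (Metric.closedBall_subset_closedBall (min_le_left _ _))


lemma key_ineq {d : ℕ} {𝒳 : Set (Euc d)} {x y : Euc d} {r s cc : ℝ} (hr : 0 ≤ r) (hs : 0 ≤ s)
    (hcc : 0 ≤ cc) (hpow : cc * r ^ d ≤ s ^ d)
    (hsub : Metric.closedBall y s ⊆ Metric.closedBall x r ∩ 𝒳) :
    ENNReal.ofReal cc * volume (Metric.closedBall x r) ≤ volume (Metric.closedBall x r ∩ 𝒳) := by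
  have h1 : volume (Metric.closedBall x r)
      = ENNReal.ofReal (r ^ d) * volume (Metric.closedBall (0 : Euc d) 1) := by
    rw [MeasureTheory.Measure.addHaar_closedBall' volume x hr, finrank_euclideanSpace_fin]
  have h2 : volume (Metric.closedBall y s)
      = ENNReal.ofReal (s ^ d) * volume (Metric.closedBall (0 : Euc d) 1) := by
    rw [MeasureTheory.Measure.addHaar_closedBall' volume y hs, finrank_euclideanSpace_fin]
  calc ENNReal.ofReal cc * volume (Metric.closedBall x r)
      = ENNReal.ofReal (cc * r ^ d) * volume (Metric.closedBall (0 : Euc d) 1) := by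
        rw [h1, ENNReal.ofReal_mul hcc, mul_assoc]
    _ ≤ ENNReal.ofReal (s ^ d) * volume (Metric.closedBall (0 : Euc d) 1) := by
        exact mul_le_mul_left (ENNReal.ofReal_le_ofReal hpow) _
    _ = volume (Metric.closedBall y s) := h2.symm
    _ ≤ volume (Metric.closedBall x r ∩ 𝒳) := measure_mono hsub


end Aux

/-- Theorem 5, smooth-boundary case, Condition (X2): if 𝒳 ⊆ ℝ^d is the
closure of a bounded open set whose boundary is a (d−1)-dimensional C¹ submanifold of ℝ^d,
then Condition (X2) holds. -/
theorem statement12 {m : ℕ} (𝒳 : Set (Euc (m + 1)))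
    (U : Set (Euc (m + 1))) (hUopen : IsOpen U) (hUbdd : Bornology.IsBounded U)
    (hXU : 𝒳 = closure U)
    (hbound : IsC1Hypersurface (frontier 𝒳)) :
    ∃ c : ℝ, 0 < c ∧ CondX2 𝒳 c := by
  rcases eq_empty_or_nonempty 𝒳 with hE | hne
  · exact ⟨1, one_pos, fun x hx => absurd hx (by simp [hE])⟩
  have hXcl : IsClosed 𝒳 := hXU ▸ isClosed_closure
  have hXbdd : Bornology.IsBounded 𝒳 := hXU ▸ hUbdd.closure
  have hUX : U ⊆ 𝒳 := hXU ▸ subset_closure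
  have hXint : 𝒳 ⊆ closure (interior 𝒳) := by
    rw [hXU]
    exact closure_mono (interior_maximal subset_closure hUopen)
  have hUne : U.Nonempty := by
    by_contra h
    rw [not_nonempty_iff_eq_empty] at h
    rw [h, closure_empty] at hXU
    exact hne.ne_empty hXU
  -- diam positive
  obtain ⟨u, huU⟩ := hUne
  obtain ⟨δ, hδ, hδsub⟩ := Metric.isOpen_iff.mp hUopen u huU
  have hdiam : 0 < Metric.diam 𝒳 := by
    set u₂ : Euc (m + 1) := u + (δ / 2) • EuclideanSpace.single (0 : Fin (m + 1)) (1 : ℝ)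
      with hu₂
    have hd : dist u₂ u = δ / 2 := by
      rw [hu₂, dist_self_add_left, norm_smul, EuclideanSpace.norm_single]
      simp [abs_of_pos hδ]
    have hu₂U : u₂ ∈ U := hδsub (by rw [Metric.mem_ball, hd]; linarith)
    have := Metric.dist_le_diam_of_mem hXbdd (hUX hu₂U) (hUX huU)
    rw [hd] at this
    linarith
  -- frontier nonempty
  have hFne : (frontier 𝒳).Nonempty := by
    by_contra h
    rw [not_nonempty_iff_eq_empty] at h
    have hclopen : IsClopen 𝒳 := isClopen_iff_frontier_eq_empty.mpr h
    have huniv : 𝒳 = univ := hclopen.eq_univ hne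
    obtain ⟨C, hC⟩ := isBounded_iff_forall_norm_le.mp hXbdd
    have h1 := hC (EuclideanSpace.single (0 : Fin (m + 1)) (C + 1)) (huniv ▸ mem_univ _)
    rw [EuclideanSpace.norm_single] at h1
    have h2 : C + 1 ≤ |C + 1| := le_abs_self _
    have := le_abs_self C
    simp only [Real.norm_eq_abs] at h1
    nlinarith [abs_nonneg (C + 1)]
  obtain ⟨c₀, hc₀pos, hcone⟩ := frontier_cone 𝒳 hXcl hXbdd hXint hbound hdiam
  set c₁ : ℝ := min c₀ (1 / 2) with hc₁def
  have hc₁pos : 0 < c₁ := lt_min hc₀pos (by norm_num)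
  have hc₁half : c₁ ≤ 1 / 2 := min_le_right _ _
  have hc₁c₀ : c₁ ≤ c₀ := min_le_left _ _
  refine ⟨(c₁ / 2) ^ (m + 1), by positivity, ?_⟩
  intro x hx r hr0 hrdiam
  rcases hr0.eq_or_lt with heq | hr
  · rw [← heq]
    simp [Metric.closedBall_zero]
  -- find a good ball
  have hmain : ∃ y s, 0 ≤ s ∧ c₁ / 2 * r ≤ s ∧
      Metric.closedBall y s ⊆ Metric.closedBall x r ∩ 𝒳 := by
    set D : ℝ := Metric.infDist x (frontier 𝒳) with hDdef
    rcases lt_or_ge D (r / 2) with hD | hD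
    · -- close to the frontier
      obtain ⟨w, hwF, hwd⟩ := isClosed_frontier.exists_infDist_eq_dist hFne x
      rw [← hDdef] at hwd
      obtain ⟨y, hy⟩ := hcone w hwF (r / 2) (by linarith) (by linarith)
      refine ⟨y, c₀ * (r / 2), by positivity, by nlinarith, hy.trans ?_⟩
      apply inter_subset_inter_left
      apply Metric.closedBall_subset_closedBall'
      rw [dist_comm, ← hwd]
      linarith
    · -- far from the frontier : the half ball is inside 𝒳
      refine ⟨x, r / 2, by linarith, by nlinarith, ?_⟩
      have hball : Metric.ball x D ⊆ 𝒳 := by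
        have hsub : Metric.ball x D ⊆ interior 𝒳 ∪ 𝒳ᶜ := by
          intro v hv
          have hvF : v ∉ frontier 𝒳 := by
            intro hvF
            have h6 := Metric.infDist_le_dist_of_mem (x := x) hvF
            rw [← hDdef] at h6
            have hlt := Metric.mem_ball.mp hv
            rw [dist_comm] at hlt
            linarith
          by_cases hv𝒳 : v ∈ 𝒳
          · left
            by_contra hint
            exact hvF ⟨subset_closure hv𝒳, hint⟩
          · right; exact hv𝒳
        have hDpos : 0 < D := by linarith
        have hxint : x ∈ interior 𝒳 := by
          by_contra hint
          exact (by
            have hxF : x ∈ frontier 𝒳 := ⟨subset_closure hx, hint⟩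
            have h7 := Metric.infDist_le_dist_of_mem (x := x) hxF
            rw [← hDdef, dist_self] at h7
            linarith : False)
        have hpre : IsPreconnected (Metric.ball x D) := (convex_ball x D).isPreconnected
        have hdisj : Disjoint (interior 𝒳) (𝒳ᶜ) :=
          disjoint_compl_right.mono_left interior_subset
        have := hpre.subset_left_of_subset_union isOpen_interior hXcl.isOpen_compl hdisj hsub
          ⟨x, Metric.mem_ball_self hDpos, hxint⟩
        exact this.trans interior_subset
      have hDpos : 0 < D := by linarith
      have hcl : Metric.closedBall x (r / 2) ⊆ 𝒳 := by
        intro v hv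
        rcases lt_or_ge (dist v x) D with h | h
        · exact hball (Metric.mem_ball.mp h)
        · -- dist v x ≤ r/2 ≤ D so dist = D = r/2 boundary case
          have h1 : dist v x ≤ r / 2 := Metric.mem_closedBall.mp hv
          have h2 : dist v x = D := le_antisymm (h1.trans hD) h
          -- v ∈ closure (ball x D) = closedBall x D, use closedBall x D ⊆ closure ball
          have h3 : v ∈ Metric.closedBall x D := by
            rw [Metric.mem_closedBall]; linarith
          have h4 : Metric.closedBall x D = closure (Metric.ball x D) :=
            (closure_ball x hDpos.ne').symm
          rw [h4] at h3
          have h5 : closure (Metric.ball x D) ⊆ closure 𝒳 := closure_mono hball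
          rw [hXcl.closure_eq] at h5
          exact h5 h3
      exact fun v hv => ⟨(Metric.closedBall_subset_closedBall (by linarith)) hv, hcl hv⟩
  obtain ⟨y, s, hs0, hsge, hsub⟩ := hmain
  apply key_ineq hr0 hs0 (by positivity) ?_ hsub
  calc (c₁ / 2) ^ (m + 1) * r ^ (m + 1) = (c₁ / 2 * r) ^ (m + 1) := by rw [mul_pow]
    _ ≤ s ^ (m + 1) := pow_le_pow_left₀ (by positivity) hsge _
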